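/- arXiv:2006.13355 — 6 statements merged into one kernel-verified Lean document; each statement's English description precedes it below -/
import Mathlib

section
/- For any integers d ≥ 2 and Q ≥ 2 with d dividing Q, and any integer a with gcd(a, d) = 1, the bias constants satisfy the anti-symmetry R_Q(d; −a) = −R_Q(d; a), where R_Q(d; −a) denotes the bias constant attached to the residue class of −a modulo d. -/
/-- The least positive residue of `n` modulo `Q`: the unique integer in `[1, Q]`
congruent to `n` mod `Q` (for `Q ≥ 1`). -/
def lpr (Q : ℕ) (n : ℤ) : ℤ := (n - 1) % Q + 1

/-- `R*_Q(d;a) = (1/φ(Q)²) Σ_{s,t=1..Q, gcd(st,Q)=1, s ≡ a (mod d)} ⟨t-s⟩_Q`. -/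
def Rstar (Q d : ℕ) (a : ℤ) : ℚ :=
  (1 / (Nat.totient Q : ℚ) ^ 2) *
    ∑ s ∈ Finset.Icc 1 Q, ∑ t ∈ Finset.Icc 1 Q,
      if Nat.gcd (s * t) Q = 1 ∧ (s : ℤ) ≡ a [ZMOD d] then (lpr Q ((t : ℤ) - (s : ℤ)) : ℚ) else 0

/-- `R̄_Q(d) = (1/φ(d)) (Q/φ(Q)) (φ(Q)+1)/2`. -/
def Rbar (Q d : ℕ) : ℚ :=
  (1 / (Nat.totient d : ℚ)) * ((Q : ℚ) / (Nat.totient Q : ℚ)) * (((Nat.totient Q : ℚ) + 1) / 2)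

/-- The bias constant `R_Q(d;a) = R*_Q(d;a) - R̄_Q(d)`. -/
def Rbias (Q d : ℕ) (a : ℤ) : ℚ := Rstar Q d a - Rbar Q d

/-! Negation on `ZMod Q` maps the units lying over `-a` to those lying over `a` and turns
`⟨t - s⟩_Q` into `⟨s - t⟩_Q`. Since `⟨z⟩_Q + ⟨-z⟩_Q` is `Q`, or `2Q` when `z ≡ 0`, the sum
`φ(Q)² (R*_Q(d;a) + R*_Q(d;-a))` is `Q (φ(Q) + 1)` times the number of units of `ZMod Q` lying over
`a`. That number is `φ(Q) / φ(d)`, because reduction `(ZMod Q)ˣ → (ZMod d)ˣ` is a surjective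
homomorphism, so `R*_Q(d;a) + R*_Q(d;-a) = 2 R̄_Q(d)`. -/

open Finset

namespace ZMod

variable {Q : ℕ}

def posRep (x : ZMod Q) : ℕ := (x - 1).val + 1

lemma one_le_posRep (x : ZMod Q) : 1 ≤ posRep x := Nat.le_add_left 1 _

lemma posRep_natCast {n : ℕ} (h1 : 1 ≤ n) (h2 : n ≤ Q) : posRep (n : ZMod Q) = n := by
  obtain ⟨m, rfl⟩ := Nat.exists_eq_add_of_le' h1
  simp [posRep, val_natCast, Nat.mod_eq_of_lt (by omega : m < Q)]

variable [NeZero Q]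

lemma posRep_le (x : ZMod Q) : posRep x ≤ Q := (x - 1).val_lt

@[simp]
lemma natCast_posRep (x : ZMod Q) : (posRep x : ZMod Q) = x := by
  simp [posRep]

lemma posRep_zero : posRep (0 : ZMod Q) = Q := by
  simpa using posRep_natCast (Q := Q) NeZero.one_le le_rfl

lemma posRep_neg_of_ne_zero {x : ZMod Q} (hx : x ≠ 0) : posRep (-x) = Q - posRep x := by
  have hlt : posRep x < Q := (posRep_le x).lt_of_ne fun h => hx (by
    rw [← natCast_posRep x, h, natCast_self])
  have := one_le_posRep x
  conv_lhs => rw [← natCast_posRep x]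
  rw [← posRep_natCast (Q := Q) (n := Q - posRep x) (by omega) (by omega),
    Nat.cast_sub hlt.le, natCast_self, zero_sub]

lemma posRep_add_posRep_neg (x : ZMod Q) :
    posRep x + posRep (-x) = Q + if x = 0 then Q else 0 := by
  by_cases hx : x = 0
  · simp [hx, posRep_zero]
  · rw [posRep_neg_of_ne_zero hx, if_neg hx]
    have := posRep_le x
    omega

lemma sum_Icc_natCast {M : Type*} [AddCommMonoid M] (f : ZMod Q → M) :
    ∑ n ∈ Icc 1 Q, f n = ∑ x, f x :=
  sum_nbij' (↑) posRep (fun _ _ => mem_univ _)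
    (fun x _ => mem_Icc.2 ⟨one_le_posRep x, posRep_le x⟩)
    (fun _ hn => posRep_natCast (mem_Icc.1 hn).1 (mem_Icc.1 hn).2)
    (fun x _ => natCast_posRep x) (fun _ _ => rfl)

end ZMod

lemma lpr_eq_posRep (Q : ℕ) [NeZero Q] (n : ℤ) : lpr Q n = ZMod.posRep (n : ZMod Q) := by
  rw [lpr, ZMod.posRep, ← ZMod.val_intCast]
  push_cast
  rfl

lemma MonoidHom.card_mul_card_fiber_of_surjective {G M : Type*} [Group G] [Fintype G] [Group M]
    [Fintype M] [DecidableEq M] (f : G →* M) (hf : Function.Surjective f) (y : M) :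
    Fintype.card M * #{g | f g = y} = Fintype.card G := by
  have := card_eq_sum_card_fiberwise (f := f) (s := univ) (t := univ) fun _ _ => mem_univ _
  rw [card_univ] at this
  rw [this, sum_congr rfl fun z _ => card_fiber_eq_of_mem_range f (hf z) (hf y), sum_const,
    card_univ, smul_eq_mul]

lemma card_filter_isUnit_and {M : Type*} [Monoid M] [Fintype M] [Fintype Mˣ]
    [DecidablePred (IsUnit : M → Prop)] (p : M → Prop) [DecidablePred p] :
    #{x | IsUnit x ∧ p x} = #{u : Mˣ | p u} := by
  refine (card_nbij (↑) (fun u hu => ?_) (fun _ _ _ _ => Units.ext) fun x hx => ?_).symm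
  · simp only [coe_filter, mem_univ, true_and, Set.mem_ofPred_eq] at hu ⊢
    exact ⟨u.isUnit, hu⟩
  · simp only [coe_filter, mem_univ, true_and, Set.mem_ofPred_eq] at hx ⊢
    exact ⟨hx.1.unit, hx.2, rfl⟩

lemma ZMod.card_isUnit (Q : ℕ) [NeZero Q] : #{x : ZMod Q | IsUnit x} = Q.totient := by
  simpa [ZMod.card_units_eq_totient] using card_filter_isUnit_and (fun _ : ZMod Q => True)

lemma ZMod.totient_mul_card_isUnit_cast_eq {d Q : ℕ} [NeZero Q] (hdQ : d ∣ Q) {b : ZMod d}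
    (hb : IsUnit b) :
    d.totient * #{x : ZMod Q | IsUnit x ∧ castHom hdQ (ZMod d) x = b} = Q.totient := by
  have : NeZero d := ⟨ne_zero_of_dvd_ne_zero (NeZero.ne Q) hdQ⟩
  have hfiber : #{u : (ZMod Q)ˣ | castHom hdQ (ZMod d) u = b}
      = #{u : (ZMod Q)ˣ | unitsMap hdQ u = hb.unit} := by
    refine congrArg Finset.card (filter_congr fun u _ => ?_)
    rw [Units.ext_iff, unitsMap_val, IsUnit.unit_spec, castHom_apply]
  rw [card_filter_isUnit_and, hfiber, ← card_units_eq_totient, ← card_units_eq_totient]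
  exact (unitsMap hdQ).card_mul_card_fiber_of_surjective (unitsMap_surjective hdQ) _

section
variable {d Q : ℕ} [NeZero Q]

def unitDiffSum (hdQ : d ∣ Q) (b : ZMod d) : ℚ :=
  ∑ x ∈ {x : ZMod Q | IsUnit x ∧ ZMod.castHom hdQ (ZMod d) x = b},
    ∑ y ∈ {y : ZMod Q | IsUnit y}, (ZMod.posRep (y - x) : ℚ)

lemma Rstar_eq_unitDiffSum (hdQ : d ∣ Q) (a : ℤ) :
    Rstar Q d a = unitDiffSum hdQ a / Q.totient ^ 2 := by
  rw [Rstar, unitDiffSum, sum_filter, ← ZMod.sum_Icc_natCast, one_div_mul_eq_div]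
  congr 1
  refine sum_congr rfl fun s _ => ?_
  have hunit (t : ℕ) : Nat.gcd (s * t) Q = 1 ↔ IsUnit (s : ZMod Q) ∧ IsUnit (t : ZMod Q) := by
    rw [← Nat.coprime_iff_gcd_eq_one, Nat.coprime_mul_iff_left, ZMod.isUnit_iff_coprime,
      ZMod.isUnit_iff_coprime]
  have hcong : (s : ℤ) ≡ a [ZMOD d] ↔ ZMod.castHom hdQ (ZMod d) s = a := by
    rw [map_natCast, ← ZMod.intCast_eq_intCast_iff, Int.cast_natCast]
  split_ifs with hs
  · rw [sum_filter, ← ZMod.sum_Icc_natCast]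
    refine sum_congr rfl fun t _ => ?_
    rw [lpr_eq_posRep]
    push_cast
    exact if_congr (by rw [hunit, hcong]; tauto) rfl rfl
  · exact sum_eq_zero fun t _ => if_neg (by rw [hunit, hcong]; tauto)

lemma unitDiffSum_neg (hdQ : d ∣ Q) (b : ZMod d) :
    unitDiffSum hdQ (-b) = ∑ x ∈ {x : ZMod Q | IsUnit x ∧ ZMod.castHom hdQ (ZMod d) x = b},
      ∑ y ∈ {y : ZMod Q | IsUnit y}, (ZMod.posRep (x - y) : ℚ) := by
  have hunit (y : ZMod Q) : -y ∈ ({y | IsUnit y} : Finset (ZMod Q)) ↔ IsUnit y := by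
    simp only [mem_filter, mem_univ, true_and, IsUnit.neg_iff]
  have hfiber (b' : ZMod d) (x : ZMod Q) :
      -x ∈ ({x | IsUnit x ∧ ZMod.castHom hdQ (ZMod d) x = b'} : Finset (ZMod Q)) ↔
        IsUnit x ∧ ZMod.castHom hdQ (ZMod d) x = -b' := by
    simp only [mem_filter, mem_univ, true_and, IsUnit.neg_iff, map_neg, neg_eq_iff_eq_neg]
  refine sum_nbij' (-·) (-·) (fun x hx => (hfiber b x).2 (mem_filter.1 hx).2)
    (fun x hx => (hfiber (-b) x).2 (by rw [neg_neg]; exact (mem_filter.1 hx).2))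
    (fun _ _ => neg_neg _) (fun _ _ => neg_neg _) fun x _ => ?_
  refine sum_nbij' (-·) (-·) (fun y hy => (hunit y).2 (mem_filter.1 hy).2)
    (fun y hy => (hunit y).2 (mem_filter.1 hy).2) (fun _ _ => neg_neg _) (fun _ _ => neg_neg _)
    fun y _ => ?_
  rw [neg_sub_neg]

lemma sum_isUnit_posRep_add_posRep {x : ZMod Q} (hx : IsUnit x) :
    ∑ y ∈ {y : ZMod Q | IsUnit y}, (ZMod.posRep (y - x) + ZMod.posRep (x - y) : ℚ)
      = Q * (Q.totient + 1) := by
  have hpair (y : ZMod Q) : (ZMod.posRep (y - x) + ZMod.posRep (x - y) : ℚ)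
      = Q + if y = x then (Q : ℚ) else 0 := by
    rw [← neg_sub y x, ← Nat.cast_add, ZMod.posRep_add_posRep_neg]
    simp [sub_eq_zero]
  rw [sum_congr rfl fun y _ => hpair y, sum_add_distrib, sum_const, sum_ite_eq' _ x,
    if_pos (mem_filter.2 ⟨mem_univ x, hx⟩), ZMod.card_isUnit, nsmul_eq_mul]
  ring

lemma unitDiffSum_add_unitDiffSum_neg (hdQ : d ∣ Q) (b : ZMod d) :
    unitDiffSum hdQ b + unitDiffSum hdQ (-b)
      = #{x : ZMod Q | IsUnit x ∧ ZMod.castHom hdQ (ZMod d) x = b} * (Q * (Q.totient + 1)) := by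
  rw [unitDiffSum_neg, unitDiffSum, ← sum_add_distrib, ← nsmul_eq_mul, ← sum_const]
  refine sum_congr rfl fun x hx => ?_
  rw [← sum_add_distrib, sum_isUnit_posRep_add_posRep (mem_filter.1 hx).2.1]

end

lemma Rstar_add_Rstar_neg {d Q : ℕ} (hdQ : d ∣ Q) {a : ℤ} (ha : Int.gcd a d = 1) :
    Rstar Q d a + Rstar Q d (-a) = 2 * Rbar Q d := by
  rcases eq_zero_or_neZero Q with rfl | hQ
  · -- both sides vanish: the sum is empty and `Rbar 0 d` contains the factor `0 / 0 = 0`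
    simp [Rstar, Rbar]
  have ha' : IsUnit (a : ZMod d) := (ZMod.coe_int_isUnit_iff_isCoprime a d).2
    (Int.isCoprime_iff_gcd_eq_one.2 (by rwa [Int.gcd_comm]))
  have hcount : (d.totient : ℚ) * #{x : ZMod Q | IsUnit x ∧ ZMod.castHom hdQ (ZMod d) x = a}
      = Q.totient := by
    exact_mod_cast ZMod.totient_mul_card_isUnit_cast_eq hdQ ha'
  have hφQ : (Q.totient : ℚ) ≠ 0 := by simp [NeZero.ne Q]
  have hφd : (d.totient : ℚ) ≠ 0 := by simp [ne_zero_of_dvd_ne_zero (NeZero.ne Q) hdQ]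
  rw [Rstar_eq_unitDiffSum hdQ, Rstar_eq_unitDiffSum hdQ, Int.cast_neg, ← add_div,
    unitDiffSum_add_unitDiffSum_neg, Rbar]
  field_simp
  linear_combination (Q : ℚ) * hcount

theorem bias_antisymmetry_general (d Q : ℕ) (hdQ : d ∣ Q)
    (a : ℤ) (ha : Int.gcd a d = 1) :
    Rbias Q d (-a) = - Rbias Q d a := by
  have h := Rstar_add_Rstar_neg hdQ ha
  rw [Rbias, Rbias]
  linarith

/-- Anti-symmetry of the bias constants: `R_Q(d;-a) = -R_Q(d;a)`. -/
theorem bias_antisymmetry (d Q : ℕ) (hd : 2 ≤ d) (hQ : 2 ≤ Q) (hdQ : d ∣ Q)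
    (a : ℤ) (ha : Int.gcd a d = 1) :
    Rbias Q d (-a) = - Rbias Q d a :=
  bias_antisymmetry_general d Q hdQ a ha
end

section
/- Let d ≥ 2 and Q ≥ 2 be integers with d dividing Q, and let a, a' be integers with gcd(a, d) = gcd(a', d) = 1. If a ≡ a' (mod rad(d)), where rad(d) = ∏_{p | d} p is the radical (maximal square-free divisor) of d, then R_Q(d; a) = R_Q(d; a'). -/
/-- The radical (maximal square-free divisor) `rad(d) = ∏_{p ∣ d, p prime} p`. -/
def radical (d : ℕ) : ℕ := ∏ p ∈ d.primeFactors, p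

open Finset

lemma lpr_eq_val_add_one {Q : ℕ} [NeZero Q] (n : ℤ) :
    lpr Q n = (((n : ZMod Q) - 1).val : ℤ) + 1 := by
  rw [lpr, ← ZMod.val_intCast, Int.cast_sub, Int.cast_one]

lemma sum_Icc_one_eq_sum_zmod {M : Type*} [AddCommMonoid M] {Q : ℕ} [NeZero Q]
    (f : ZMod Q → M) : ∑ s ∈ Icc 1 Q, f s = ∑ x : ZMod Q, f x := by
  refine sum_nbij' (fun s => (s : ZMod Q)) (fun x => (x - 1).val + 1) (by simp)
    (fun x _ => by simpa using (x - 1).val_lt) (fun s hs => ?_) (fun x _ => by simp) (fun _ _ => rfl)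
  obtain ⟨hs1, hsQ⟩ := mem_Icc.mp hs
  have hcast : (s : ZMod Q) - 1 = ((s - 1 : ℕ) : ZMod Q) := by rw [Nat.cast_sub hs1, Nat.cast_one]
  simp only [hcast, ZMod.val_natCast_of_lt (show s - 1 < Q by omega)]
  omega

lemma IsNilpotent.isUnit_add_iff {R : Type*} [CommRing R] {b : R} (hb : IsNilpotent b) (x : R) :
    IsUnit (x + b) ↔ IsUnit x := by
  refine ⟨fun h => ?_, fun h => hb.isUnit_add_left_of_commute h (Commute.all _ _)⟩
  simpa using hb.neg.isUnit_add_left_of_commute h (Commute.all _ _)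

lemma isNilpotent_intCast_of_radical_dvd {Q : ℕ} (hQ : Q ≠ 0) {b : ℤ} (h : (radical Q : ℤ) ∣ b) :
    IsNilpotent (b : ZMod Q) := by
  refine ⟨Q, ?_⟩
  rw [← Int.cast_pow, ZMod.intCast_zmod_eq_zero_iff_dvd]
  exact (Int.natCast_dvd_natCast.mpr (Nat.dvd_prod_primeFactors_pow_self hQ)).trans
    (by exact_mod_cast pow_dvd_pow_of_dvd h Q)

lemma exists_modEq_and_radical_dvd {d : ℕ} (hd : d ≠ 0) {c : ℤ} (hc : (radical d : ℤ) ∣ c)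
    (Q : ℕ) : ∃ b : ℤ, b ≡ c [ZMOD d] ∧ (radical Q : ℤ) ∣ b := by
  classical
  set m := ∏ p ∈ Q.primeFactors with ¬ p ∣ d, p
  have hm : m.Coprime d := Nat.Coprime.prod_left fun p hp => by
    obtain ⟨hpQ, hpd⟩ := mem_filter.mp hp
    exact (Nat.Prime.coprime_iff_not_dvd (Nat.prime_of_mem_primeFactors hpQ)).mpr hpd
  refine ⟨c * m ^ d.totient, ?_, ?_⟩
  · simpa using (Int.natCast_modEq_iff.mpr (Nat.ModEq.pow_totient hm)).mul_left c
  · have hdiv : radical Q ∣ radical d * m := by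
      rw [radical, ← prod_filter_mul_prod_filter_not Q.primeFactors (· ∣ d)]
      refine mul_dvd_mul_right (prod_dvd_prod_of_subset _ _ _ fun p hp => ?_) m
      obtain ⟨hpQ, hpd⟩ := mem_filter.mp hp
      exact Nat.mem_primeFactors.mpr ⟨Nat.prime_of_mem_primeFactors hpQ, hpd, hd⟩
    refine (Int.natCast_dvd_natCast.mpr hdiv).trans ?_
    push_cast
    exact mul_dvd_mul hc (dvd_pow_self _ (Nat.totient_pos.mpr (Nat.pos_of_ne_zero hd)).ne')

lemma sum_isUnit_fiber_eq_of_isNilpotent {R S M : Type*} [CommRing R] [Fintype R]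
    [DecidablePred (IsUnit : R → Prop)] [Ring S] [DecidableEq S] [AddCommMonoid M]
    (π : R →+* S) (w : R → M) {c c' : S} {b : R} (hb : IsNilpotent b) (hπb : π b = c' - c) :
    ∑ x, ∑ y, (if IsUnit x ∧ IsUnit y ∧ π x = c then w (y - x) else 0) =
      ∑ x, ∑ y, (if IsUnit x ∧ IsUnit y ∧ π x = c' then w (y - x) else 0) := by
  refine Fintype.sum_equiv (Equiv.addRight b) _ _ fun x => ?_
  refine Fintype.sum_equiv (Equiv.addRight b) _ _ fun y => ?_
  have hfiber : π (x + b) = c' ↔ π x = c := by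
    rw [map_add, hπb, add_sub_left_comm, add_eq_left, sub_eq_zero]
  simp only [Equiv.coe_addRight, hb.isUnit_add_iff, hfiber, add_sub_add_right_eq_sub]

lemma Rstar_eq_sum_zmod {d Q : ℕ} [NeZero Q] (hdQ : d ∣ Q) (a : ℤ) :
    Rstar Q d a = 1 / (Q.totient : ℚ) ^ 2 * ∑ x : ZMod Q, ∑ y : ZMod Q,
      if IsUnit x ∧ IsUnit y ∧ ZMod.castHom hdQ (ZMod d) x = a
      then (((y - x - 1).val : ℚ) + 1) else 0 := by
  set F : ZMod Q → ZMod Q → ℚ := fun x y =>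
    if IsUnit x ∧ IsUnit y ∧ ZMod.castHom hdQ (ZMod d) x = a then ((y - x - 1).val : ℚ) + 1 else 0
  have hsummand : ∀ s t : ℕ,
      (if Nat.gcd (s * t) Q = 1 ∧ (s : ℤ) ≡ a [ZMOD d] then (lpr Q ((t : ℤ) - (s : ℤ)) : ℚ)
        else 0) = F s t := by
    intro s t
    have hunit : Nat.gcd (s * t) Q = 1 ↔ IsUnit (s : ZMod Q) ∧ IsUnit (t : ZMod Q) := by
      simp only [ZMod.isUnit_iff_coprime, ← Nat.coprime_mul_iff_left, Nat.Coprime]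
    have hfiber : (s : ℤ) ≡ a [ZMOD d] ↔ ZMod.castHom hdQ (ZMod d) s = a := by
      rw [map_natCast, ← ZMod.intCast_eq_intCast_iff, Int.cast_natCast]
    refine if_congr ((hunit.and hfiber).trans and_assoc) ?_ rfl
    rw [lpr_eq_val_add_one]
    push_cast
    rfl
  simp only [Rstar, hsummand]
  rw [sum_congr rfl fun (s : ℕ) _ => sum_Icc_one_eq_sum_zmod (F s),
    sum_Icc_one_eq_sum_zmod fun x => ∑ y, F x y]

theorem bias_radical_congr_general (d Q : ℕ) (hQ : 2 ≤ Q) (hdQ : d ∣ Q)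
    (a a' : ℤ) (hcong : a ≡ a' [ZMOD (radical d)]) :
    Rbias Q d a = Rbias Q d a' := by
  have hQ0 : Q ≠ 0 := by omega
  have : NeZero Q := ⟨hQ0⟩
  obtain ⟨b, hbd, hbQ⟩ := exists_modEq_and_radical_dvd (ne_zero_of_dvd_ne_zero hQ0 hdQ)
    (Int.ModEq.dvd hcong) Q
  have hπb : ZMod.castHom hdQ (ZMod d) (b : ZMod Q) = a' - a := by
    rw [map_intCast, (ZMod.intCast_eq_intCast_iff _ _ d).mpr hbd, Int.cast_sub]
  have htranslate := sum_isUnit_fiber_eq_of_isNilpotent _ (fun z : ZMod Q => ((z - 1).val : ℚ) + 1)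
    (isNilpotent_intCast_of_radical_dvd hQ0 hbQ) hπb
  rw [Rbias, Rbias, Rstar_eq_sum_zmod hdQ, Rstar_eq_sum_zmod hdQ, htranslate]

/-- If `a ≡ a' (mod rad(d))` then `R_Q(d;a) = R_Q(d;a')`. -/
theorem bias_radical_congr (d Q : ℕ) (hd : 2 ≤ d) (hQ : 2 ≤ Q) (hdQ : d ∣ Q)
    (a a' : ℤ) (ha : Int.gcd a d = 1) (ha' : Int.gcd a' d = 1)
    (hcong : a ≡ a' [ZMOD (radical d)]) :
    Rbias Q d a = Rbias Q d a' :=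
  bias_radical_congr_general d Q hQ hdQ a a' hcong
end

section
/- Let d ≥ 2 and Q ≥ 2 be integers with d dividing Q, and let a be an integer with gcd(a, d) = 1. Writing d_sf = rad(d) for the radical of d, if d_sf ≥ 2 then R_Q(d; a) = (φ(d_sf)/φ(d)) · R_Q(d_sf; a). -/
/-!
Put `W(s) = [s ∈ (ℤ/Q)ˣ] · ∑_{t ∈ (ℤ/Q)ˣ} ⟨t - s⟩_Q` for `s ∈ ℤ/Q`; then `φ(Q)² R*_Q(e; a)` is the
sum of `W` over the residues `s ≡ a (mod e)`. Adding a nilpotent element of `ℤ/Q` (a multiple of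
`rad Q`) preserves units, so `W` is invariant under such shifts. By the Chinese remainder theorem
for the moduli `d` and `rad Q`, whose gcd is `rad d`, every class `c ∈ ℤ/d` with `rad d ∣ c` is
the image of such a nilpotent, so the sum of `W` over a class mod `d` only depends on the class
mod `rad d`. Each class mod `rad d` splits into `d / rad d` classes mod `d`, hence
`R*_Q(rad d; a) = (d / rad d) R*_Q(d; a)`, and `φ(d) / d = φ(rad d) / rad d` finishes the proof.
-/

open Finset

theorem radical_eq_uniqueFactorizationMonoid_radical (n : ℕ) :
    radical n = UniqueFactorizationMonoid.radical n := by
  rw [radical, UniqueFactorizationMonoid.radical,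
    ← UniqueFactorizationMonoid.toFinset_normalizedFactors, Nat.factors_eq]
  rfl

theorem radical_dvd_self (n : ℕ) : radical n ∣ n := Nat.prod_primeFactors_dvd n

theorem radical_ne_zero (n : ℕ) : radical n ≠ 0 := by
  rw [radical_eq_uniqueFactorizationMonoid_radical]
  exact UniqueFactorizationMonoid.radical_ne_zero

theorem gcd_radical_of_dvd {d Q : ℕ} (hdQ : d ∣ Q) (hQ : Q ≠ 0) :
    Nat.gcd d (radical Q) = radical d := by
  have hd : d ≠ 0 := ne_zero_of_dvd_ne_zero hQ hdQ
  rw [radical_eq_uniqueFactorizationMonoid_radical, radical_eq_uniqueFactorizationMonoid_radical]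
  refine Nat.dvd_antisymm ?_ ?_
  · have hrad : IsRadical (Nat.gcd d (UniqueFactorizationMonoid.radical Q)) :=
      UniqueFactorizationMonoid.isRadical_radical.of_dvd UniqueFactorizationMonoid.radical_ne_zero
        (Nat.gcd_dvd_right _ _)
    exact (UniqueFactorizationMonoid.dvd_radical_iff hrad hd).2 (Nat.gcd_dvd_left _ _)
  · exact Nat.dvd_gcd UniqueFactorizationMonoid.radical_dvd_self
      (UniqueFactorizationMonoid.radical_dvd_radical hdQ hQ)

theorem totient_radical_mul (d : ℕ) :
    (Nat.totient (radical d) : ℚ) * d = Nat.totient d * radical d := by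
  rw [Nat.totient_eq_mul_prod_factors, Nat.totient_eq_mul_prod_factors, radical,
    Nat.primeFactors_prod_primeFactors]
  ring

theorem isNilpotent_natCast_of_radical_dvd {Q k : ℕ} (hQ : Q ≠ 0) (h : radical Q ∣ k) :
    IsNilpotent (k : ZMod Q) := by
  rw [radical_eq_uniqueFactorizationMonoid_radical,
    ← UniqueFactorizationMonoid.exists_dvd_pow_iff_radical_dvd hQ] at h
  obtain ⟨n, hn⟩ := h
  exact ⟨n, by rw [← Nat.cast_pow, ZMod.natCast_eq_zero_iff]; exact hn⟩

theorem exists_isNilpotent_castHom_eq {d Q : ℕ} (hdQ : d ∣ Q) (hQ : Q ≠ 0) (c : ZMod d)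
    (hc : ZMod.castHom (radical_dvd_self d) (ZMod (radical d)) c = 0) :
    ∃ δ : ZMod Q, IsNilpotent δ ∧ ZMod.castHom hdQ (ZMod d) δ = c := by
  have : NeZero d := ⟨ne_zero_of_dvd_ne_zero hQ hdQ⟩
  have hc' : c.val ≡ 0 [MOD Nat.gcd d (radical Q)] := by
    rw [gcd_radical_of_dvd hdQ hQ, Nat.modEq_zero_iff_dvd, ← ZMod.natCast_eq_zero_iff,
      ← map_natCast (ZMod.castHom (radical_dvd_self d) (ZMod (radical d))),
      ZMod.natCast_zmod_val, hc]
  obtain ⟨k, hkc, hk0⟩ := Nat.chineseRemainder' hc'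
  refine ⟨k, isNilpotent_natCast_of_radical_dvd hQ (Nat.modEq_zero_iff_dvd.1 hk0), ?_⟩
  rw [map_natCast, (ZMod.natCast_eq_natCast_iff _ _ _).2 hkc, ZMod.natCast_zmod_val]

theorem IsNilpotent.isUnit_add_left_iff {R : Type*} [CommRing R] {r u : R}
    (hr : IsNilpotent r) : IsUnit (u + r) ↔ IsUnit u :=
  ⟨fun h => by simpa using hr.neg.isUnit_add_left_of_commute h (Commute.all _ _),
    fun h => hr.isUnit_add_left_of_commute h (Commute.all _ _)⟩

theorem ZMod.card_fiber_castHom_mul {r d : ℕ} [NeZero d] (hrd : r ∣ d) (b : ZMod d) :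
    #{x | ZMod.castHom hrd (ZMod r) x = ZMod.castHom hrd (ZMod r) b} * r = d := by
  have : NeZero r := ⟨ne_zero_of_dvd_ne_zero (NeZero.ne d) hrd⟩
  set ρ := ZMod.castHom hrd (ZMod r)
  have hfiber : ∀ y : ZMod r, #{x | ρ x = y} = #{x | ρ x = ρ b} := fun y =>
    AddMonoidHom.card_fiber_eq_of_mem_range ρ.toAddMonoidHom (ZMod.castHom_surjective hrd y)
      ⟨b, rfl⟩
  calc #{x | ρ x = ρ b} * r = ∑ y : ZMod r, #{x | ρ x = y} := by
        simp [hfiber, ZMod.card, mul_comm]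
    _ = d := by rw [← Finset.card_eq_sum_card_fiberwise (by simp), Finset.card_univ, ZMod.card]

theorem sum_Icc_natCast_eq_sum_zmod {M : Type*} [AddCommMonoid M] (Q : ℕ) [NeZero Q]
    (f : ZMod Q → M) : ∑ s ∈ Icc 1 Q, f s = ∑ x, f x := by
  obtain ⟨n, rfl⟩ : ∃ n, Q = n + 1 := Nat.exists_eq_succ_of_ne_zero (NeZero.ne Q)
  rw [← Finset.Ico_add_one_right_eq_Icc, Finset.sum_Ico_eq_sum_range, Nat.add_sub_cancel,
    ← Fin.sum_univ_eq_sum_range (fun k => f ((1 + k : ℕ) : ZMod (n + 1)))]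
  refine Fintype.sum_equiv (Equiv.addLeft (1 : ZMod (n + 1))) _ _ fun i => ?_
  push_cast
  exact congrArg (f <| 1 + ·) (ZMod.natCast_zmod_val i)

theorem lpr_val_intCast {Q : ℕ} [NeZero Q] (n : ℤ) : lpr Q ((n : ZMod Q).val) = lpr Q n := by
  unfold lpr
  congr 1
  refine Int.ModEq.sub_right _ ?_
  rw [← ZMod.intCast_eq_intCast_iff, Int.cast_natCast, ZMod.natCast_zmod_val]

def unitWeight (Q : ℕ) [NeZero Q] (s : ZMod Q) : ℚ :=
  ∑ t : ZMod Q, if IsUnit s ∧ IsUnit t then (lpr Q (t - s).val : ℚ) else 0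

section Weights

variable {Q : ℕ} [NeZero Q]

def fiberWeight {e : ℕ} (he : e ∣ Q) (b : ZMod e) : ℚ :=
  ∑ s with ZMod.castHom he (ZMod e) s = b, unitWeight Q s

theorem Rstar_eq_fiberWeight {e : ℕ} (he : e ∣ Q) (a : ℤ) :
    Rstar Q e a = fiberWeight he a / (Nat.totient Q : ℚ) ^ 2 := by
  set G : ZMod Q → ZMod Q → ℚ := fun S T =>
    if ZMod.castHom he (ZMod e) S = a then
      (if IsUnit S ∧ IsUnit T then (lpr Q (T - S).val : ℚ) else 0) else 0
  have hsummand : ∀ s t : ℕ, (if Nat.gcd (s * t) Q = 1 ∧ (s : ℤ) ≡ a [ZMOD e] then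
      (lpr Q ((t : ℤ) - (s : ℤ)) : ℚ) else 0) = G s t := by
    intro s t
    have hunit : Nat.gcd (s * t) Q = 1 ↔ IsUnit (s : ZMod Q) ∧ IsUnit (t : ZMod Q) := by
      rw [ZMod.isUnit_iff_coprime, ZMod.isUnit_iff_coprime]
      exact Nat.coprime_mul_iff_left
    have hmod : (s : ℤ) ≡ a [ZMOD e] ↔ ZMod.castHom he (ZMod e) s = a := by
      rw [map_natCast, ← ZMod.intCast_eq_intCast_iff, Int.cast_natCast]
    have hdiff : lpr Q ((t : ℤ) - s) = lpr Q ((t : ZMod Q) - s).val := by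
      rw [← lpr_val_intCast, Int.cast_sub, Int.cast_natCast, Int.cast_natCast]
    simp only [hunit, hmod, hdiff, G, ← ite_and, and_comm]
  have hreindex : ∑ s ∈ Icc 1 Q, ∑ t ∈ Icc 1 Q, G s t = ∑ S, ∑ T, G S T := by
    rw [← sum_Icc_natCast_eq_sum_zmod Q (fun S => ∑ T, G S T)]
    exact Finset.sum_congr rfl fun s _ => sum_Icc_natCast_eq_sum_zmod Q (G s)
  rw [Rstar, fiberWeight, Finset.sum_filter, one_div, div_eq_inv_mul]
  simp only [hsummand]
  rw [hreindex]
  simp only [G, ← Finset.ite_sum_zero, unitWeight]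

theorem unitWeight_add_of_isNilpotent (s : ZMod Q) {δ : ZMod Q} (hδ : IsNilpotent δ) :
    unitWeight Q (s + δ) = unitWeight Q s :=
  (Fintype.sum_equiv (Equiv.addRight δ) _ _ fun t => by
    simp only [Equiv.coe_addRight, hδ.isUnit_add_left_iff, add_sub_add_right_eq_sub]).symm

theorem fiberWeight_add_of_castHom_radical_eq_zero {d : ℕ} (hdQ : d ∣ Q) (b : ZMod d)
    {c : ZMod d} (hc : ZMod.castHom (radical_dvd_self d) (ZMod (radical d)) c = 0) :
    fiberWeight hdQ (b + c) = fiberWeight hdQ b := by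
  obtain ⟨δ, hδ, rfl⟩ := exists_isNilpotent_castHom_eq hdQ (NeZero.ne Q) c hc
  refine Finset.sum_nbij' (· - δ) (· + δ) (fun s hs => ?_) (fun s hs => ?_) (by simp) (by simp)
    fun s _ => by rw [← unitWeight_add_of_isNilpotent (s - δ) hδ, sub_add_cancel]
  all_goals simp only [Finset.mem_filter, Finset.mem_univ, true_and, map_sub, map_add] at hs ⊢
  · rw [hs, add_sub_cancel_right]
  · rw [hs]

theorem fiberWeight_castHom {r d : ℕ} [NeZero d] (hrd : r ∣ d) (hdQ : d ∣ Q) (b : ZMod d) :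
    fiberWeight (hrd.trans hdQ) (ZMod.castHom hrd (ZMod r) b) =
      ∑ x with ZMod.castHom hrd (ZMod r) x = ZMod.castHom hrd (ZMod r) b, fiberWeight hdQ x := by
  rw [fiberWeight, ← Finset.sum_fiberwise_of_maps_to (g := ZMod.castHom hdQ (ZMod d))
    (t := {x | ZMod.castHom hrd (ZMod r) x = ZMod.castHom hrd (ZMod r) b}) fun s hs => ?_]
  · refine Finset.sum_congr rfl fun x hx => ?_
    rw [fiberWeight, Finset.filter_filter]
    congr 1
    ext s
    simp only [Finset.mem_filter, Finset.mem_univ, true_and] at hx ⊢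
    rw [← ZMod.castHom_comp hrd hdQ, RingHom.comp_apply]
    exact ⟨And.right, fun h => ⟨h ▸ hx, h⟩⟩
  · simp only [Finset.mem_filter, Finset.mem_univ, true_and] at hs ⊢
    rwa [← RingHom.comp_apply, ZMod.castHom_comp]

theorem totient_mul_fiberWeight_radical {d : ℕ} (hdQ : d ∣ Q) (b : ZMod d) :
    (Nat.totient (radical d) : ℚ) * fiberWeight ((radical_dvd_self d).trans hdQ)
        (ZMod.castHom (radical_dvd_self d) (ZMod (radical d)) b) =
      Nat.totient d * fiberWeight hdQ b := by
  have : NeZero d := ⟨ne_zero_of_dvd_ne_zero (NeZero.ne Q) hdQ⟩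
  set ρ := ZMod.castHom (radical_dvd_self d) (ZMod (radical d))
  have hconst : ∀ x ∈ ({x | ρ x = ρ b} : Finset (ZMod d)),
      fiberWeight hdQ x = fiberWeight hdQ b := fun x hx => by
    rw [← add_sub_cancel b x]
    refine fiberWeight_add_of_castHom_radical_eq_zero hdQ b ?_
    simp only [Finset.mem_filter, Finset.mem_univ, true_and] at hx
    rw [map_sub, hx, sub_self]
  have hcount : fiberWeight ((radical_dvd_self d).trans hdQ) (ρ b) * radical d =
      d * fiberWeight hdQ b := by
    rw [fiberWeight_castHom _ hdQ, Finset.sum_congr rfl hconst, Finset.sum_const, nsmul_eq_mul,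
      mul_right_comm, ← Nat.cast_mul, ZMod.card_fiber_castHom_mul]
  apply mul_right_cancel₀ (Nat.cast_ne_zero.2 (radical_ne_zero d) : (radical d : ℚ) ≠ 0)
  linear_combination (Nat.totient (radical d) : ℚ) * hcount +
    fiberWeight hdQ b * totient_radical_mul d

end Weights

theorem bias_radical_equiv_general (d Q : ℕ) (hQ : 2 ≤ Q) (hdQ : d ∣ Q)
    (a : ℤ) :
    Rbias Q d a = ((Nat.totient (radical d) : ℚ) / (Nat.totient d : ℚ)) *
      Rbias Q (radical d) a := by
  have : NeZero Q := ⟨by omega⟩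
  have hφd : (Nat.totient d : ℚ) ≠ 0 := by
    simpa [Nat.totient_eq_zero] using ne_zero_of_dvd_ne_zero (NeZero.ne Q) hdQ
  have hφr : (Nat.totient (radical d) : ℚ) ≠ 0 := by
    simpa [Nat.totient_eq_zero] using radical_ne_zero d
  have key := totient_mul_fiberWeight_radical hdQ (a : ZMod d)
  rw [map_intCast] at key
  rw [Rbias, Rbias, Rbar, Rbar, Rstar_eq_fiberWeight hdQ,
    Rstar_eq_fiberWeight ((radical_dvd_self d).trans hdQ), mul_sub]
  congr 1
  · rw [div_mul_eq_mul_div, ← mul_div_assoc, key]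
    field_simp
  · field_simp

/-- `R_Q(d;a) = (φ(rad d)/φ(d)) · R_Q(rad d; a)`. -/
theorem bias_radical_equiv (d Q : ℕ) (hd : 2 ≤ d) (hQ : 2 ≤ Q) (hdQ : d ∣ Q)
    (a : ℤ) (ha : Int.gcd a d = 1) (hsf : 2 ≤ radical d) :
    Rbias Q d a = ((Nat.totient (radical d) : ℚ) / (Nat.totient d : ℚ)) *
      Rbias Q (radical d) a :=
  bias_radical_equiv_general d Q hQ hdQ a
end

section
/- Suppose d, p, Q₀ ≥ 2 are pairwise coprime integers with p prime, set Q = d·Q₀, and let a be an integer with gcd(a, d) = 1. Then (1/φ(d)) · Σ_{s,t = 1,...,pQ, gcd(st, pQ) = 1} ⟨t − s, t − p·a⟩_{pQ₀, d} = Σ_{s = 1,...,pQ, s ≡ p·a (mod d), gcd(s, pQ) = 1} Σ_{t = 1,...,pQ, gcd(t, pQ) = 1} ⟨t − s, t − s⟩_{pQ₀, d}, as an identity of rational numbers, where φ is Euler's totient function. -/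
/-- `⟨n₁, n₂⟩_{Q₁,Q₂}`: the unique integer in `[1, Q₁Q₂]` congruent to `nᵢ` mod `Qᵢ`
(for coprime `Q₁, Q₂`), realized as the least positive common solution. -/
noncomputable def crt2 (Q₁ Q₂ : ℕ) (n₁ n₂ : ℤ) : ℕ :=
  sInf {m : ℕ | 1 ≤ m ∧ (m : ℤ) ≡ n₁ [ZMOD Q₁] ∧ (m : ℤ) ≡ n₂ [ZMOD Q₂]}

/-- `⟨n₁, n₂, n₃⟩_{Q₁,Q₂,Q₃}`: the unique integer in `[1, Q₁Q₂Q₃]` congruent to `nᵢ`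
mod `Qᵢ` (for pairwise coprime `Qᵢ`), realized as the least positive common solution. -/
noncomputable def crt3 (Q₁ Q₂ Q₃ : ℕ) (n₁ n₂ n₃ : ℤ) : ℕ :=
  sInf {m : ℕ | 1 ≤ m ∧ (m : ℤ) ≡ n₁ [ZMOD Q₁] ∧ (m : ℤ) ≡ n₂ [ZMOD Q₂] ∧
    (m : ℤ) ≡ n₃ [ZMOD Q₃]}

/-!
Write `N = M * d` with `M = p * Q₀`. The summand on the left depends on `s` only through its
residue mod `M`, and on the right the condition `s ≡ b (mod d)` lets one replace the second
argument `t - s` by `t - b`, where `b = p * a`. So both sides are sums of one function of `s mod M` over units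
`s mod N`, the right one restricted to `s ≡ b (mod d)`. By the Chinese remainder theorem the units
mod `N` are pairs of units mod `M` and mod `d`: the left sum sees each unit mod `M` once for each
of the `φ(d)` units mod `d`, the right one exactly once.
-/

open Finset

lemma crt2_congr {Q₁ Q₂ : ℕ} {n₁ n₂ m₁ m₂ : ℤ} (h₁ : n₁ ≡ m₁ [ZMOD Q₁])
    (h₂ : n₂ ≡ m₂ [ZMOD Q₂]) : crt2 Q₁ Q₂ n₁ n₂ = crt2 Q₁ Q₂ m₁ m₂ := by
  unfold crt2 Int.ModEq at *
  rw [h₁, h₂]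

lemma crt2_natCast_sub_val (M d : ℕ) (s t : ℕ) (n : ℤ) :
    crt2 M d (t - s) n = crt2 M d (t - (s : ZMod M).val) n := by
  refine crt2_congr (Int.ModEq.sub_left _ ?_) Int.ModEq.rfl
  rw [ZMod.val_natCast, Int.natCast_mod]
  exact (Int.mod_modEq _ _).symm

namespace ZMod

variable {R : Type*} [AddCommMonoid R] {m n : ℕ}

lemma chineseRemainder_fst (h : m.Coprime n) (x : ZMod (m * n)) :
    (chineseRemainder h x).1 = x.cast :=
  Prod.fst_zmod_cast x

lemma chineseRemainder_snd (h : m.Coprime n) (x : ZMod (m * n)) :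
    (chineseRemainder h x).2 = x.cast :=
  Prod.snd_zmod_cast x

def unitsChineseRemainder (h : m.Coprime n) : (ZMod (m * n))ˣ ≃* (ZMod m)ˣ × (ZMod n)ˣ :=
  (Units.mapEquiv (chineseRemainder h).toMulEquiv).trans MulEquiv.prodUnits

lemma val_unitsChineseRemainder_fst (h : m.Coprime n) (u : (ZMod (m * n))ˣ) :
    ((unitsChineseRemainder h u).1 : ZMod m) = (u : ZMod (m * n)).cast :=
  chineseRemainder_fst h u

lemma val_unitsChineseRemainder_snd (h : m.Coprime n) (u : (ZMod (m * n))ˣ) :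
    ((unitsChineseRemainder h u).2 : ZMod n) = (u : ZMod (m * n)).cast :=
  chineseRemainder_snd h u

variable [NeZero m] [NeZero n]

theorem sum_units_cast_eq_totient_nsmul (h : m.Coprime n) (f : ZMod m → R) :
    ∑ u : (ZMod (m * n))ˣ, f (u : ZMod (m * n)).cast = n.totient • ∑ u : (ZMod m)ˣ, f u := by
  rw [Fintype.sum_equiv (unitsChineseRemainder h).toEquiv _ (fun w => f w.1)
    (fun u => by rw [MulEquiv.toEquiv_eq_coe, MulEquiv.coe_toEquiv, val_unitsChineseRemainder_fst]),
    Fintype.sum_prod_type]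
  simp [card_univ, card_units_eq_totient, smul_sum]

theorem sum_units_cast_eq_of_isUnit (h : m.Coprime n) {v : ZMod n} (hv : IsUnit v)
    (f : ZMod m → R) :
    ∑ u : (ZMod (m * n))ˣ,
        (if ((u : ZMod (m * n)).cast : ZMod n) = v then f (u : ZMod (m * n)).cast else 0) =
      ∑ u : (ZMod m)ˣ, f u := by
  rw [Fintype.sum_equiv (unitsChineseRemainder h).toEquiv _
    (fun w => if w.2 = hv.unit then f w.1 else 0) (fun u => by
      simp only [MulEquiv.toEquiv_eq_coe, MulEquiv.coe_toEquiv, Units.ext_iff, hv.unit_spec,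
        val_unitsChineseRemainder_fst, val_unitsChineseRemainder_snd]),
    Fintype.sum_prod_type]
  simp

theorem sum_Icc_natCast_s10 (g : ZMod n → R) : ∑ s ∈ Icc 1 n, g s = ∑ x, g x := by
  have hinj : Set.InjOn (fun s : ℕ => (s : ZMod n)) (Icc 1 n) := by
    intro s hs t ht hst
    simp only [coe_Icc, Set.mem_Icc] at hs ht
    rw [natCast_eq_natCast_iff] at hst
    rcases le_total s t with h | h
    · have := Nat.eq_zero_of_dvd_of_lt ((Nat.modEq_iff_dvd' h).mp hst) (by omega)
      omega
    · have := Nat.eq_zero_of_dvd_of_lt ((Nat.modEq_iff_dvd' h).mp hst.symm) (by omega)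
      omega
  rw [← sum_image hinj]
  congr
  exact eq_univ_of_card _ (by rw [card_image_of_injOn hinj]; simp)

theorem sum_Icc_coprime_eq_sum_units (g : ZMod n → R) :
    ∑ s ∈ Icc 1 n, (if s.Coprime n then g s else 0) = ∑ u : (ZMod n)ˣ, g u := by
  calc ∑ s ∈ Icc 1 n, (if s.Coprime n then g s else 0)
      = ∑ s ∈ Icc 1 n, (if (s : ZMod n).val.Coprime n then g s else 0) := by
        simp only [val_natCast, coprime_mod_iff_coprime]
    _ = ∑ x : ZMod n, if x.val.Coprime n then g x else 0 :=
        sum_Icc_natCast_s10 fun x => if x.val.Coprime n then g x else 0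
    _ = ∑ x : {x : ZMod n // x.val.Coprime n}, g x := by
        rw [← sum_filter, sum_subtype _ mem_filter_univ]
    _ = ∑ u : (ZMod n)ˣ, g u := (Fintype.sum_equiv unitsEquivCoprime _ _ fun _ => rfl).symm

end ZMod

noncomputable def crt2RowSum (M d : ℕ) (b : ℤ) (u : ZMod M) : ℚ :=
  ∑ t ∈ Icc 1 (M * d), if t.Coprime (M * d) then (crt2 M d (t - u.val) (t - b) : ℚ) else 0

lemma sum_crt2_gcd_mul_eq_crt2RowSum (M d : ℕ) (b : ℤ) (s : ℕ) :
    ∑ t ∈ Icc 1 (M * d),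
        (if Nat.gcd (s * t) (M * d) = 1 then (crt2 M d (t - s) (t - b) : ℚ) else 0) =
      if s.Coprime (M * d) then crt2RowSum M d b (s : ZMod M) else 0 := by
  by_cases hs : s.Coprime (M * d)
  · refine (if_pos hs).symm ▸ sum_congr rfl fun t _ => ?_
    rw [crt2_natCast_sub_val]
    exact if_congr (Nat.coprime_mul_iff_left.trans (and_iff_right hs)) rfl rfl
  · exact (if_neg hs).symm ▸ sum_eq_zero fun t _ =>
      if_neg fun hst => hs (Nat.Coprime.coprime_mul_right hst)

lemma sum_crt2_modEq_eq_crt2RowSum (M d : ℕ) (b : ℤ) (s : ℕ) :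
    ∑ t ∈ Icc 1 (M * d),
        (if (s : ℤ) ≡ b [ZMOD d] ∧ Nat.gcd s (M * d) = 1 ∧ Nat.gcd t (M * d) = 1 then
          (crt2 M d (t - s) (t - s) : ℚ) else 0) =
      if s.Coprime (M * d) then
        (if (s : ZMod d) = b then crt2RowSum M d b (s : ZMod M) else 0) else 0 := by
  have hsb : (s : ZMod d) = b ↔ (s : ℤ) ≡ b [ZMOD d] := by
    rw [← ZMod.intCast_eq_intCast_iff, Int.cast_natCast]
  by_cases hs : (s : ℤ) ≡ b [ZMOD d] ∧ s.Coprime (M * d)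
  · rw [if_pos hs.2, if_pos (hsb.mpr hs.1)]
    refine sum_congr rfl fun t _ => ?_
    simp only [← Nat.coprime_iff_gcd_eq_one, hs, true_and]
    rw [crt2_congr Int.ModEq.rfl (Int.ModEq.sub_left _ hs.1), crt2_natCast_sub_val]
  · rw [sum_eq_zero fun t _ => if_neg fun hst => hs ⟨hst.1, hst.2.1⟩]
    split_ifs with h₁ h₂ <;> first | rfl | exact absurd ⟨hsb.mp h₂, h₁⟩ hs

theorem sum_crt2_coprime_eq_totient_mul {M d : ℕ} [NeZero M] [NeZero d] (hMd : M.Coprime d)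
    {b : ℤ} (hb : IsUnit (b : ZMod d)) :
    ∑ s ∈ Icc 1 (M * d), ∑ t ∈ Icc 1 (M * d),
        (if Nat.gcd (s * t) (M * d) = 1 then (crt2 M d (t - s) (t - b) : ℚ) else 0) =
      d.totient * ∑ s ∈ Icc 1 (M * d), ∑ t ∈ Icc 1 (M * d),
        (if (s : ℤ) ≡ b [ZMOD d] ∧ Nat.gcd s (M * d) = 1 ∧ Nat.gcd t (M * d) = 1 then
          (crt2 M d (t - s) (t - s) : ℚ) else 0) := by
  have hcastM : ∀ s : ℕ, ((s : ZMod (M * d)).cast : ZMod M) = s :=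
    ZMod.cast_natCast (dvd_mul_right M d)
  have hcastd : ∀ s : ℕ, ((s : ZMod (M * d)).cast : ZMod d) = s :=
    ZMod.cast_natCast (dvd_mul_left d M)
  simp only [sum_crt2_gcd_mul_eq_crt2RowSum, sum_crt2_modEq_eq_crt2RowSum, ← hcastM, ← hcastd]
  rw [ZMod.sum_Icc_coprime_eq_sum_units fun x => crt2RowSum M d b x.cast,
    ZMod.sum_Icc_coprime_eq_sum_units fun x =>
      if (x.cast : ZMod d) = b then crt2RowSum M d b (x.cast : ZMod M) else 0,
    ZMod.sum_units_cast_eq_totient_nsmul hMd, ZMod.sum_units_cast_eq_of_isUnit hMd hb, nsmul_eq_mul]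

theorem crt_sum_residue_identity_general (d p Q₀ : ℕ) (hd : 2 ≤ d) (hQ₀ : 2 ≤ Q₀) (hp : p.Prime)
    (h₁ : Nat.Coprime d p) (h₂ : Nat.Coprime d Q₀)
    (a : ℤ) (ha : Int.gcd a d = 1) :
    (1 / (Nat.totient d : ℚ)) *
        ∑ s ∈ Finset.Icc 1 (p * (d * Q₀)), ∑ t ∈ Finset.Icc 1 (p * (d * Q₀)),
          (if Nat.gcd (s * t) (p * (d * Q₀)) = 1 then
            (crt2 (p * Q₀) d ((t : ℤ) - (s : ℤ)) ((t : ℤ) - (p : ℤ) * a) : ℚ) else 0) =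
      ∑ s ∈ Finset.Icc 1 (p * (d * Q₀)), ∑ t ∈ Finset.Icc 1 (p * (d * Q₀)),
        (if (s : ℤ) ≡ (p : ℤ) * a [ZMOD d] ∧ Nat.gcd s (p * (d * Q₀)) = 1 ∧
            Nat.gcd t (p * (d * Q₀)) = 1 then
          (crt2 (p * Q₀) d ((t : ℤ) - (s : ℤ)) ((t : ℤ) - (s : ℤ)) : ℚ) else 0) := by
  have : NeZero d := ⟨by omega⟩
  have : NeZero (p * Q₀) := ⟨Nat.mul_ne_zero hp.ne_zero (by omega)⟩
  have hpa : IsUnit (((p : ℤ) * a : ℤ) : ZMod d) := by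
    rw [Int.cast_mul, Int.cast_natCast]
    refine ((ZMod.isUnit_iff_coprime p d).mpr h₁.symm).mul
      ((ZMod.coe_int_isUnit_iff_isCoprime a d).mpr ?_)
    rwa [Int.isCoprime_iff_gcd_eq_one, Int.gcd_comm]
  have htot : (d.totient : ℚ) ≠ 0 := by exact_mod_cast (Nat.totient_pos.mpr (by omega)).ne'
  rw [show p * (d * Q₀) = p * Q₀ * d by ring,
    sum_crt2_coprime_eq_totient_mul (Nat.Coprime.mul_left h₁.symm h₂.symm) hpa, one_div,
    inv_mul_cancel_left₀ htot]

/-- `(1/φ(d)) Σ_{s,t=1..pQ, gcd(st,pQ)=1} ⟨t-s, t-pa⟩_{pQ₀,d}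
      = Σ_{s=1..pQ, s ≡ pa (mod d), gcd(s,pQ)=1} Σ_{t=1..pQ, gcd(t,pQ)=1} ⟨t-s, t-s⟩_{pQ₀,d}`,
where `Q = dQ₀`. -/
theorem crt_sum_residue_identity (d p Q₀ : ℕ) (hd : 2 ≤ d) (hQ₀ : 2 ≤ Q₀) (hp : p.Prime)
    (h₁ : Nat.Coprime d p) (h₂ : Nat.Coprime d Q₀) (h₃ : Nat.Coprime p Q₀)
    (a : ℤ) (ha : Int.gcd a d = 1) :
    (1 / (Nat.totient d : ℚ)) *
        ∑ s ∈ Finset.Icc 1 (p * (d * Q₀)), ∑ t ∈ Finset.Icc 1 (p * (d * Q₀)),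
          (if Nat.gcd (s * t) (p * (d * Q₀)) = 1 then
            (crt2 (p * Q₀) d ((t : ℤ) - (s : ℤ)) ((t : ℤ) - (p : ℤ) * a) : ℚ) else 0) =
      ∑ s ∈ Finset.Icc 1 (p * (d * Q₀)), ∑ t ∈ Finset.Icc 1 (p * (d * Q₀)),
        (if (s : ℤ) ≡ (p : ℤ) * a [ZMOD d] ∧ Nat.gcd s (p * (d * Q₀)) = 1 ∧
            Nat.gcd t (p * (d * Q₀)) = 1 then
          (crt2 (p * Q₀) d ((t : ℤ) - (s : ℤ)) ((t : ℤ) - (s : ℤ)) : ℚ) else 0) :=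
  crt_sum_residue_identity_general d p Q₀ hd hQ₀ hp h₁ h₂ a ha
end

section
/- Fix an integer Q ≥ 2, a real constant c > 0, and an integer m ≥ 1. For n large enough that the series converges, define H₁^m(n) = Σ_{k ≥ 1} (u_{n+k} − u_n)^m · (1/log u_n − 1/log u_{n+k}) · (1 − c/log u_n)^{k−1}. Then H₁^m(n) = O((log n)^m / n) as n → ∞. -/
/-- `useq Q n` is `u_n`, the `n`-th positive integer coprime to `Q`
(increasing enumeration, `u₁ = 1`). -/
noncomputable def useq (Q : ℕ) (n : ℕ) : ℕ :=
  Nat.nth (fun m => 0 < m ∧ Nat.Coprime m Q) (n - 1)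

/-- `H₁^m(n) = Σ_{k ≥ 1} (u_{n+k} - u_n)^m (1/log u_n - 1/log u_{n+k}) (1 - c/log u_n)^{k-1}`. -/
noncomputable def H1 (Q : ℕ) (c : ℝ) (m : ℕ) (n : ℕ) : ℝ :=
  ∑' k : ℕ,
    ((useq Q (n + (k + 1)) : ℝ) - (useq Q n : ℝ)) ^ m *
      (1 / Real.log (useq Q n) - 1 / Real.log (useq Q (n + (k + 1)))) *
      (1 - c / Real.log (useq Q n)) ^ k

/-!
If `a` is coprime to `Q` then so is `a + Q`, so consecutive terms of `u` differ by at most `Q`;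
hence `n ≤ u_n ≤ Qn + 1` and `u_{n+k} ≤ u_n + Qk`. With `L = log u_n` and `r = 1 - c/L`, the bound
`1/L - 1/log b ≤ (b - u_n)/(u_n L²)` (from `log t ≤ t - 1`) makes the `k`-th term at most
`Q^(m+1) (k+1)^(m+1) r^k / (u_n L²)`. Since `(k+1)^j ≤ j! C(k+j, j)` and
`∑ C(k+j, j) r^k = (1 - r)^(-(j+1)) = (L/c)^(j+1)`, the series is at most
`Q^(m+1) (m+1)! L^m / (c^(m+2) u_n)`, and `L ≤ (log (Q+1) + 1) log n` once `log n ≥ 1`.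
-/

open Filter Asymptotics Real
open scoped Nat

section CoprimeSequence

open Nat

variable {Q : ℕ}

theorem setOf_pos_coprime_infinite (hQ : 0 < Q) : {m | 0 < m ∧ m.Coprime Q}.Infinite :=
  Set.infinite_of_forall_exists_gt fun a =>
    ⟨a * Q + 1, ⟨succ_pos _, by simp⟩, by nlinarith⟩

theorem useq_succ_le (hQ : 0 < Q) (n : ℕ) : useq Q (n + 1) ≤ useq Q n + Q := by
  rcases n with _ | i
  · simp [useq]
  simp only [useq, add_tsub_cancel_right]
  have hi := nth_mem_of_infinite (setOf_pos_coprime_infinite hQ) i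
  by_contra! h
  have := le_nth_of_lt_nth_succ h ⟨by omega, coprime_add_self_left.2 hi.2⟩
  omega

theorem useq_add_le (hQ : 0 < Q) (n k : ℕ) : useq Q (n + k) ≤ useq Q n + Q * k := by
  induction k with
  | zero => simp
  | succ k ih => grind [useq_succ_le hQ (n + k)]

theorem useq_mono (hQ : 0 < Q) : Monotone (useq Q) :=
  (nth_monotone (setOf_pos_coprime_infinite hQ)).comp fun _ _ h => Nat.sub_le_sub_right h 1

theorem le_useq (hQ : 0 < Q) (n : ℕ) : n ≤ useq Q n := by
  rcases n with _ | n
  · exact zero_le _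
  have h0 := (nth_mem_of_infinite (setOf_pos_coprime_infinite hQ) 0).1
  have := (nth_strictMono (setOf_pos_coprime_infinite hQ)).add_le_nat n 0
  simp only [useq, add_tsub_cancel_right, add_zero] at this ⊢
  omega

theorem useq_le (hQ : 0 < Q) (n : ℕ) : useq Q n ≤ Q * n + 1 := by
  have h0 : useq Q 0 ≤ 1 := by
    rw [useq, zero_tsub, nth_zero]
    exact Nat.sInf_le ⟨one_pos, coprime_one_left Q⟩
  have := useq_add_le hQ 0 n
  rw [zero_add] at this
  omega

end CoprimeSequence

theorem one_div_log_sub_one_div_log_le {a b : ℝ} (ha : 0 < a) (hla : 0 < log a) (hab : a ≤ b) :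
    1 / log a - 1 / log b ≤ (b - a) / (a * log a ^ 2) := by
  have hlab : log a ≤ log b := log_le_log ha hab
  have hlog_sub : log b - log a ≤ (b - a) / a := by
    rw [← log_div (by linarith) ha.ne']
    calc log (b / a) ≤ b / a - 1 := log_le_sub_one_of_pos (div_pos (ha.trans_le hab) ha)
      _ = (b - a) / a := by field_simp
  calc 1 / log a - 1 / log b = (log b - log a) / (log a * log b) := by
        field_simp [(hla.trans_le hlab).ne']
    _ ≤ (log b - log a) / (log a * log a) := by gcongr
    _ ≤ (b - a) / a / (log a * log a) := by gcongr
    _ = (b - a) / (a * log a ^ 2) := by ring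

theorem pow_mul_one_div_log_sub_le {a b d : ℝ} (m : ℕ) (ha : 0 < a) (hla : 0 < log a)
    (hab : a ≤ b) (hbd : b ≤ a + d) :
    (b - a) ^ m * (1 / log a - 1 / log b) ≤ d ^ (m + 1) / (a * log a ^ 2) := by
  have hd : 0 ≤ d := by linarith
  have hlog : 0 ≤ 1 / log a - 1 / log b :=
    sub_nonneg.2 (one_div_le_one_div_of_le hla (log_le_log ha hab))
  calc (b - a) ^ m * (1 / log a - 1 / log b) ≤ d ^ m * (d / (a * log a ^ 2)) := by
        gcongr
        · linarith
        · exact (one_div_log_sub_one_div_log_le ha hla hab).trans (by gcongr; linarith)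
    _ = d ^ (m + 1) / (a * log a ^ 2) := by ring

theorem add_one_pow_le_factorial_mul_choose (k j : ℕ) : (k + 1) ^ j ≤ j ! * (k + j).choose j := by
  rw [← Nat.descFactorial_eq_factorial_mul_choose]
  simpa [show k + j + 1 - j = k + 1 by omega] using Nat.pow_sub_le_descFactorial (k + j) j

theorem abs_tsum_mul_geometric_le {f : ℕ → ℝ} {C r : ℝ} (j : ℕ) (hr0 : 0 ≤ r) (hr1 : r < 1)
    (hf0 : ∀ k, 0 ≤ f k) (hf : ∀ k, f k ≤ C * (k + 1) ^ j) :
    |∑' k, f k * r ^ k| ≤ C * j ! / (1 - r) ^ (j + 1) := by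
  have hC : 0 ≤ C := by simpa using (hf0 0).trans (hf 0)
  have hr : ‖r‖ < 1 := by rwa [norm_of_nonneg hr0]
  set g : ℕ → ℝ := fun k => C * j ! * ((k + j).choose j * r ^ k)
  have hfg : ∀ k, f k * r ^ k ≤ g k := fun k => by
    have hchoose : ((k : ℝ) + 1) ^ j ≤ j ! * (k + j).choose j := by
      exact_mod_cast add_one_pow_le_factorial_mul_choose k j
    calc f k * r ^ k ≤ C * (k + 1) ^ j * r ^ k := by gcongr; exact hf k
      _ ≤ C * (j ! * (k + j).choose j) * r ^ k := by gcongr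
      _ = g k := by ring
  have hg : Summable g := (summable_choose_mul_geometric_of_norm_lt_one j hr).mul_left _
  have hnonneg : ∀ k, 0 ≤ f k * r ^ k := fun k => mul_nonneg (hf0 k) (pow_nonneg hr0 k)
  rw [abs_of_nonneg (tsum_nonneg hnonneg)]
  calc ∑' k, f k * r ^ k ≤ ∑' k, g k :=
        (hg.of_nonneg_of_le hnonneg hfg).tsum_le_tsum hfg hg
    _ = C * j ! / (1 - r) ^ (j + 1) := by
        rw [tsum_mul_left, tsum_choose_mul_geometric_of_norm_lt_one j hr]
        ring

theorem log_pow_div_le {x y K : ℝ} (m : ℕ) (hx : 0 < x) (hxy : x ≤ y) (hyK : y ≤ K * x)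
    (hlx : 1 ≤ log x) : log y ^ m / y ≤ (log K + 1) ^ m * (log x ^ m / x) := by
  have hK : 0 < K := pos_of_mul_pos_left (hx.trans_le (hxy.trans hyK)) hx.le
  have hly : 0 ≤ log y := (zero_le_one.trans hlx).trans (log_le_log hx hxy)
  have hlK : 0 ≤ log K := log_nonneg (by nlinarith)
  have hlogy : log y ≤ (log K + 1) * log x := by
    have : log y ≤ log K + log x := by
      rw [← log_mul hK.ne' hx.ne']
      exact log_le_log (hx.trans_le hxy) hyK
    nlinarith
  calc log y ^ m / y ≤ ((log K + 1) * log x) ^ m / x := by gcongr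
    _ = (log K + 1) ^ m * (log x ^ m / x) := by rw [mul_pow]; ring

theorem abs_H1_le {Q n : ℕ} {c : ℝ} (hQ : 0 < Q) (m : ℕ) (hc : 0 < c)
    (hcL : c ≤ log (useq Q n)) :
    |H1 Q c m n| ≤ Q ^ (m + 1) * (m + 1)! / c ^ (m + 2) * (log (useq Q n) ^ m / useq Q n) := by
  set a : ℝ := (useq Q n : ℝ)
  set L := log a
  have hL : 0 < L := hc.trans_le hcL
  have ha : 0 < a := by
    rcases (useq Q n).eq_zero_or_pos with h | h
    · simp [L, a, h] at hL
    · exact Nat.cast_pos.2 h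
  have hr0 : 0 ≤ 1 - c / L := sub_nonneg.2 ((div_le_one hL).2 hcL)
  have hr1 : 1 - c / L < 1 := sub_lt_self _ (div_pos hc hL)
  have hterm (k : ℕ) :
      0 ≤ (useq Q (n + (k + 1)) - a) ^ m * (1 / L - 1 / log (useq Q (n + (k + 1)))) ∧
      (useq Q (n + (k + 1)) - a) ^ m * (1 / L - 1 / log (useq Q (n + (k + 1))))
        ≤ Q ^ (m + 1) / (a * L ^ 2) * (k + 1) ^ (m + 1) := by
    have hab : a ≤ useq Q (n + (k + 1)) := Nat.cast_le.2 (useq_mono hQ (n.le_add_right _))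
    have hbd : (useq Q (n + (k + 1)) : ℝ) ≤ a + Q * (k + 1) := by
      have := Nat.cast_le (α := ℝ) |>.2 (useq_add_le hQ n (k + 1))
      push_cast at this
      exact this
    refine ⟨mul_nonneg (pow_nonneg (sub_nonneg.2 hab) m)
      (sub_nonneg.2 (one_div_le_one_div_of_le hL (log_le_log ha hab))), ?_⟩
    calc _ ≤ (Q * (k + 1) : ℝ) ^ (m + 1) / (a * L ^ 2) :=
          pow_mul_one_div_log_sub_le m ha hL hab hbd
      _ = _ := by rw [mul_pow]; ring
  calc |H1 Q c m n| ≤ Q ^ (m + 1) / (a * L ^ 2) * (m + 1)! / (1 - (1 - c / L)) ^ (m + 1 + 1) :=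
        abs_tsum_mul_geometric_le (m + 1) hr0 hr1 (fun k => (hterm k).1) (fun k => (hterm k).2)
    _ = _ := by rw [sub_sub_cancel, div_pow, show m + 1 + 1 = m + 2 by rfl, pow_add L m 2]; field_simp

theorem H1_isBigO_general (Q : ℕ) (hQ : 2 ≤ Q) (c : ℝ) (hc : 0 < c) (m : ℕ) :
    (fun n : ℕ => H1 Q c m n) =O[Filter.atTop]
      fun n : ℕ => (Real.log n) ^ m / (n : ℝ) := by
  have hQ0 : 0 < Q := by omega
  have hlog : ∀ᶠ n : ℕ in atTop, max 1 c ≤ log n :=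
    (tendsto_log_atTop.comp tendsto_natCast_atTop_atTop).eventually_ge_atTop _
  refine .of_bound (Q ^ (m + 1) * (m + 1)! / c ^ (m + 2) * (log (Q + 1) + 1) ^ m) ?_
  filter_upwards [hlog, eventually_ge_atTop 1] with n hn hn1
  have hn1 : (1 : ℝ) ≤ n := by exact_mod_cast hn1
  have hn0 : (0 : ℝ) < n := by linarith
  have hnu : (n : ℝ) ≤ useq Q n := by exact_mod_cast le_useq hQ0 n
  have huQ : (useq Q n : ℝ) ≤ (Q + 1) * n := by
    have : (useq Q n : ℝ) ≤ Q * n + 1 := by exact_mod_cast useq_le hQ0 n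
    nlinarith
  have hcL : c ≤ log (useq Q n) := (le_of_max_le_right hn).trans (log_le_log hn0 hnu)
  calc ‖H1 Q c m n‖ ≤ Q ^ (m + 1) * (m + 1)! / c ^ (m + 2) * (log (useq Q n) ^ m / useq Q n) :=
        abs_H1_le hQ0 m hc hcL
    _ ≤ Q ^ (m + 1) * (m + 1)! / c ^ (m + 2) * ((log (Q + 1) + 1) ^ m * (log n ^ m / n)) := by
        gcongr
        exact log_pow_div_le m hn0 hnu huQ (le_of_max_le_left hn)
    _ = _ := by rw [norm_of_nonneg (by positivity)]; ring

/-- `H₁^m(n) = O((log n)^m / n)`. -/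
theorem H1_isBigO (Q : ℕ) (hQ : 2 ≤ Q) (c : ℝ) (hc : 0 < c) (m : ℕ) (hm : 1 ≤ m) :
    (fun n : ℕ => H1 Q c m n) =O[Filter.atTop]
      fun n : ℕ => (Real.log n) ^ m / (n : ℝ) :=
  H1_isBigO_general Q hQ c hc m
end

section
/- Fix an integer Q ≥ 2 and an index i ≥ 1, and let s be the least positive residue of u_i modulo Q. Then Σ_{h=1}^{φ(Q)} ((u_{i+h} − u_i)/Q − h/φ(Q)) = −(φ(Q) + 1)/2 + (1/Q) · Σ_{t = 1,...,Q, gcd(t,Q) = 1} ⟨t − s⟩_Q, where φ is Euler's totient function and ⟨n⟩_Q denotes the unique integer in [1, Q] congruent to n mod Q. -/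
open Finset

lemma lpr_modEq (Q : ℕ) (n : ℤ) : lpr Q n ≡ n [ZMOD Q] := by
  simpa [lpr] using (Int.mod_modEq (n - 1) Q).add_right 1

lemma lpr_congr {Q : ℕ} {m n : ℤ} (h : m ≡ n [ZMOD Q]) : lpr Q m = lpr Q n := by
  simp only [lpr, (h.sub_right 1).eq]

lemma lpr_eq_self {Q : ℕ} {n : ℤ} (h1 : 1 ≤ n) (h2 : n ≤ Q) : lpr Q n = n := by
  rw [lpr, Int.emod_eq_of_lt (by omega) (by omega)]
  ring

lemma Function.Periodic.sum_Ico_eq_sum_range {M : Type*} [AddCommMonoid M] {f : ℕ → M} {c : ℕ}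
    (hf : Function.Periodic f c) (n : ℕ) : ∑ x ∈ Ico n (n + c), f x = ∑ x ∈ range c, f x := by
  rw [sum_eq_multiset_sum, sum_eq_multiset_sum, range_val, ← Nat.multiset_Ico_map_mod n c,
    Multiset.map_map]
  congr 1
  exact Multiset.map_congr rfl fun x _ => (hf.map_mod_nat x).symm

namespace Nat

variable {p : ℕ → Prop} [DecidablePred p]

lemma count_add_card_filter_Ico {a b : ℕ} (hab : a ≤ b) :
    count p a + #{x ∈ Ico a b | p x} = count p b := by
  rw [count_eq_card_filter_range, count_eq_card_filter_range, range_eq_Ico, range_eq_Ico,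
    ← Ico_union_Ico_eq_Ico (Nat.zero_le a) hab, filter_union,
    card_union_of_disjoint (disjoint_filter_filter (Ico_disjoint_Ico_consecutive 0 a b))]

lemma image_nth_Ico_count (hp : (Set.ofPred p).Infinite) (a b : ℕ) :
    (Ico (count p a) (count p b)).image (nth p) = {x ∈ Ico a b | p x} := by
  ext x
  simp only [mem_image, mem_filter, mem_Ico]
  constructor
  · rintro ⟨j, ⟨haj, hjb⟩, rfl⟩
    exact ⟨⟨(count_le_iff_le_nth hp).mp haj, nth_lt_of_lt_count hjb⟩, nth_mem_of_infinite hp j⟩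
  · rintro ⟨⟨hax, hxb⟩, hx⟩
    exact ⟨count p x, ⟨count_monotone p hax, count_strict_mono hx hxb⟩, nth_count hx⟩

end Nat

lemma card_filter_coprime_Ico (n Q : ℕ) : #{x ∈ Ico n (n + Q) | x.Coprime Q} = Nat.totient Q := by
  simp_rw [Nat.coprime_comm (m := Q)]
  exact Nat.filter_coprime_Ico_eq_totient Q n

lemma sum_Icc_one_natCast_mul_two {R : Type*} [CommSemiring R] (n : ℕ) :
    (∑ h ∈ Icc 1 n, (h : R)) * 2 = n * (n + 1) := by
  induction n with
  | zero => simp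
  | succ k ih =>
    rw [sum_Icc_succ_top (by omega), add_mul, ih]
    push_cast
    ring

lemma infinite_setOf_pos_coprime {Q : ℕ} (hQ : 0 < Q) : {m | 0 < m ∧ m.Coprime Q}.Infinite := by
  refine Set.infinite_of_injective_forall_mem (f := fun k : ℕ => Q * k + 1) ?_ fun k => ?_
  · intro a b hab
    exact Nat.eq_of_mul_eq_mul_left hQ (Nat.add_right_cancel hab)
  · exact ⟨Nat.succ_pos _, by simp⟩

lemma sum_Icc_totient_useq {M : Type*} [AddCommMonoid M] {Q i : ℕ} (hQ : 0 < Q) (hi : 1 ≤ i)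
    (g : ℕ → M) :
    ∑ h ∈ Icc 1 (Nat.totient Q), g (useq Q (i + h)) =
      ∑ x ∈ Ico (useq Q i + 1) (useq Q i + 1 + Q) with x.Coprime Q, g x := by
  set p : ℕ → Prop := fun m => 0 < m ∧ m.Coprime Q
  have hp : (Set.ofPred p).Infinite := infinite_setOf_pos_coprime hQ
  set a := useq Q i
  have hwindow :
      {x ∈ Ico (a + 1) (a + 1 + Q) | p x} = {x ∈ Ico (a + 1) (a + 1 + Q) | x.Coprime Q} :=
    filter_congr fun x hx => and_iff_right (by simp only [mem_Ico] at hx; omega)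
  have hstart : Nat.count p (a + 1) = i := by
    change Nat.count p (Nat.nth p (i - 1) + 1) = i
    rw [Nat.count_nth_succ_of_infinite hp]; omega
  have hend : Nat.count p (a + 1 + Q) = i + Nat.totient Q := by
    rw [← Nat.count_add_card_filter_Ico (a := a + 1) (by omega), hwindow,
      card_filter_coprime_Ico, hstart]
  calc ∑ h ∈ Icc 1 (Nat.totient Q), g (useq Q (i + h))
      = ∑ j ∈ Ico i (i + Nat.totient Q), g (Nat.nth p j) :=
        sum_nbij' (fun h => i + h - 1) (fun j => j + 1 - i)
          (by simp only [mem_Icc, mem_Ico]; omega) (by simp only [mem_Icc, mem_Ico]; omega)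
          (by simp only [mem_Icc]; omega) (by simp only [mem_Ico]; omega) fun _ _ => rfl
    _ = ∑ x ∈ (Ico (Nat.count p (a + 1)) (Nat.count p (a + 1 + Q))).image (Nat.nth p), g x := by
        rw [sum_image (Nat.nth_injective hp).injOn, hstart, hend]
    _ = _ := by rw [Nat.image_nth_Ico_count hp, hwindow]

lemma sum_Icc_coprime_lpr_sub {R : Type*} [Ring R] (Q a : ℕ) :
    ∑ t ∈ Icc 1 Q, (if Nat.gcd t Q = 1 then (lpr Q ((t : ℤ) - lpr Q (a : ℤ)) : R) else 0) =
      ∑ x ∈ Ico (a + 1) (a + 1 + Q) with x.Coprime Q, ((x : R) - a) := by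
  set F : ℕ → R := fun t => if Nat.gcd t Q = 1 then (lpr Q ((t : ℤ) - lpr Q (a : ℤ)) : R) else 0
  have hF : Function.Periodic F Q := fun t => by
    simp only [F, Nat.gcd_add_self_left, Nat.cast_add]
    rw [lpr_congr (m := _ + Q - _) ((Int.add_modEq_right).sub_right _)]
  have hIcc : Icc 1 Q = Ico 1 (1 + Q) := by ext; simp only [mem_Icc, mem_Ico]; omega
  rw [sum_filter, hIcc, hF.sum_Ico_eq_sum_range, ← hF.sum_Ico_eq_sum_range (a + 1)]
  refine sum_congr rfl fun x hx => ?_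
  simp only [mem_Ico] at hx
  have hres : lpr Q ((x : ℤ) - lpr Q (a : ℤ)) = x - a := by
    rw [lpr_congr (((lpr_modEq Q a).sub_left _)), lpr_eq_self (by omega) (by omega)]
  simp only [F, hres, Nat.Coprime]
  push_cast
  rfl

/-- With `s` the least positive residue of `u_i` mod `Q`,
`Σ_{h=1}^{φ(Q)} ((u_{i+h} - u_i)/Q - h/φ(Q)) = -(φ(Q)+1)/2 + (1/Q) Σ_{t=1..Q, gcd(t,Q)=1} ⟨t-s⟩_Q`. -/
theorem useq_window_sum (Q : ℕ) (hQ : 2 ≤ Q) (i : ℕ) (hi : 1 ≤ i) :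
    ∑ h ∈ Finset.Icc 1 (Nat.totient Q),
        (((useq Q (i + h) : ℚ) - (useq Q i : ℚ)) / (Q : ℚ)
          - (h : ℚ) / (Nat.totient Q : ℚ)) =
      -(((Nat.totient Q : ℚ) + 1) / 2) +
        (1 / (Q : ℚ)) * ∑ t ∈ Finset.Icc 1 Q,
          (if Nat.gcd t Q = 1 then (lpr Q ((t : ℤ) - lpr Q (useq Q i : ℤ)) : ℚ) else 0) := by
  have hQ0 : 0 < Q := by omega
  have hφ : (Nat.totient Q : ℚ) ≠ 0 := by exact_mod_cast (Nat.totient_pos.mpr hQ0).ne'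
  have hgauss :
      ∑ h ∈ Icc 1 (Nat.totient Q), (h : ℚ) = Nat.totient Q * (Nat.totient Q + 1) / 2 := by
    rw [eq_div_iff two_ne_zero, sum_Icc_one_natCast_mul_two]
  rw [sum_sub_distrib, ← sum_div, ← sum_div, hgauss,
    sum_Icc_totient_useq hQ0 hi fun x => (x : ℚ) - useq Q i, sum_Icc_coprime_lpr_sub]
  field_simp
  ring
end
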